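/- Relaxed triangle inequality for Lasso-regularized fsFGW with exponent q ≥ 1: assume every entry of the probability vector b is strictly positive. Let fsFGW_L(X,Y), fsFGW_L(Y,Z), fsFGW_L(X,Z) denote the optimal values of the Lasso-regularized fsFGW problems between the corresponding pairs of structured objects, all with the same exponent q ≥ 1, the same α ∈ [0,1], and the same λ > 0. Then fsFGW_L(X,Z) ≤ 2^{q−1} · ( fsFGW_L(X,Y) + fsFGW_L(Y,Z) ). -/

import Mathlib

/-- A probability vector: nonnegative entries summing to 1. -/
def IsProb {n : ℕ} (a : Fin n → ℝ) : Prop := (∀ i, 0 ≤ a i) ∧ ∑ i, a i = 1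

/-- Membership in the transport polytope U(a,b). -/
def InU {n m : ℕ} (a : Fin n → ℝ) (b : Fin m → ℝ) (T : Matrix (Fin n) (Fin m) ℝ) : Prop :=
  (∀ i j, 0 ≤ T i j) ∧ (∀ i, ∑ j, T i j = a i) ∧ (∀ j, ∑ i, T i j = b j)

/-- Feature score `s_r(T) = Σ_{i,j} T_{ij} |X_{ir} − Y_{jr}|^q`. -/
noncomputable def score {n m d : ℕ} (q : ℝ) (X : Matrix (Fin n) (Fin d) ℝ)
    (Y : Matrix (Fin m) (Fin d) ℝ) (T : Matrix (Fin n) (Fin m) ℝ) (r : Fin d) : ℝ :=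
  ∑ i, ∑ j, T i j * |X i r - Y j r| ^ q

/-- Gromov–Wasserstein term `GW(T) = Σ |C^X_{ii'} − C^Y_{jj'}|^q T_{ij} T_{i'j'}`. -/
noncomputable def gwTerm {n m : ℕ} (q : ℝ) (CX : Matrix (Fin n) (Fin n) ℝ)
    (CY : Matrix (Fin m) (Fin m) ℝ) (T : Matrix (Fin n) (Fin m) ℝ) : ℝ :=
  ∑ i, ∑ i', ∑ j, ∑ j', |CX i i' - CY j j'| ^ q * T i j * T i' j'

/-- Lasso-regularized fsFGW objective. -/
noncomputable def FL {n m d : ℕ} (q α lam : ℝ)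
    (CX : Matrix (Fin n) (Fin n) ℝ) (CY : Matrix (Fin m) (Fin m) ℝ)
    (X : Matrix (Fin n) (Fin d) ℝ) (Y : Matrix (Fin m) (Fin d) ℝ)
    (T : Matrix (Fin n) (Fin m) ℝ) (w : Fin d → ℝ) : ℝ :=
  (1 - α) * ∑ r, (1 - w r) * score q X Y T r + α * gwTerm q CX CY T + lam * ∑ r, w r

/-- Optimal value of the Lasso-regularized fsFGW problem between two
structured objects. -/
noncomputable def fsLVal {n m d : ℕ} (q α lam : ℝ)
    (CX : Matrix (Fin n) (Fin n) ℝ) (CY : Matrix (Fin m) (Fin m) ℝ)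
    (X : Matrix (Fin n) (Fin d) ℝ) (Y : Matrix (Fin m) (Fin d) ℝ)
    (a : Fin n → ℝ) (b : Fin m → ℝ) : ℝ :=
  sInf {v : ℝ | ∃ T w, InU a b T ∧ (∀ r, w r ∈ Set.Icc (0:ℝ) 1) ∧
    v = FL q α lam CX CY X Y T w}

/-!
Given `T₁ ∈ U(a, b)` and `T₂ ∈ U(b, c)`, glue them along `b` into the plan
`T₁ i j * T₂ j k / b j` on triples; its `(i, k)`-marginal lies in `U(a, c)`. Integrating the
pointwise bound `|x - z| ^ q ≤ 2 ^ (q - 1) * (|x - y| ^ q + |y - z| ^ q)` (convexity of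
`t ↦ t ^ q`) against the glued plan bounds every feature score, and the same argument on pairs
of points, i.e. for the Kronecker squares of the couplings, bounds the Gromov–Wasserstein term.
With feature weights `max w₁ w₂` the Lasso penalty is at most the sum of the two penalties,
and passing to infima gives the relaxed triangle inequality.
-/

open Finset Matrix
open scoped Kronecker

lemma abs_sub_rpow_le_two_rpow_mul {q : ℝ} (hq : 1 ≤ q) (x y z : ℝ) :
    |x - z| ^ q ≤ 2 ^ (q - 1) * (|x - y| ^ q + |y - z| ^ q) := by
  have h := NNReal.rpow_add_le_mul_rpow_add_rpow
    ⟨|x - y|, abs_nonneg _⟩ ⟨|y - z|, abs_nonneg _⟩ hq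
  calc |x - z| ^ q ≤ (|x - y| + |y - z|) ^ q :=
        Real.rpow_le_rpow (abs_nonneg _) (abs_sub_le x y z) (by linarith)
    _ ≤ _ := by exact_mod_cast h

lemma one_sub_max_mul_le {w₁ w₂ s s₁ s₂ K : ℝ} (hw₁ : w₁ ≤ 1) (hw₂ : w₂ ≤ 1)
    (hs₁ : 0 ≤ s₁) (hs₂ : 0 ≤ s₂) (hK : 0 ≤ K) (hs : s ≤ K * (s₁ + s₂)) :
    (1 - max w₁ w₂) * s ≤ K * ((1 - w₁) * s₁ + (1 - w₂) * s₂) :=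
  calc (1 - max w₁ w₂) * s ≤ (1 - max w₁ w₂) * (K * (s₁ + s₂)) :=
        mul_le_mul_of_nonneg_left hs (sub_nonneg.2 (max_le hw₁ hw₂))
    _ = K * ((1 - max w₁ w₂) * s₁ + (1 - max w₁ w₂) * s₂) := by ring
    _ ≤ K * ((1 - w₁) * s₁ + (1 - w₂) * s₂) := by
        gcongr
        · exact le_max_left w₁ w₂
        · exact le_max_right w₁ w₂

lemma max_le_mul_add {w₁ w₂ K : ℝ} (hw₁ : 0 ≤ w₁) (hw₂ : 0 ≤ w₂) (hK : 1 ≤ K) :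
    max w₁ w₂ ≤ K * (w₁ + w₂) :=
  max_le (by nlinarith) (by nlinarith)

theorem csInf_le_mul_add_csInf {S T U : Set ℝ} {K : ℝ} (hK : 0 ≤ K)
    (hS : S.Nonempty) (hS' : BddBelow S) (hT : T.Nonempty) (hT' : BddBelow T)
    (hU : BddBelow U) (h : ∀ s ∈ S, ∀ t ∈ T, ∃ u ∈ U, u ≤ K * (s + t)) :
    sInf U ≤ K * (sInf S + sInf T) := by
  rw [← csInf_add hS hS' hT hT', ← smul_eq_mul, ← Real.sInf_smul_of_nonneg hK]
  refine le_csInf (hS.add hT).smul_set ?_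
  rintro _ ⟨_, ⟨s, hs, t, ht, rfl⟩, rfl⟩
  obtain ⟨u, hu, hle⟩ := h s hs t ht
  exact (csInf_le hU hu).trans hle

section Gluing

variable {ι κ μ : Type*}

/-- The `(i, k)`-marginal of the plan `P i j * Q j k / b j` on triples. Where `b j = 0`, the
column `P · j` vanishes, so the junk value `x / 0 = 0` is harmless. -/
noncomputable def glue [Fintype κ] (b : κ → ℝ) (P : Matrix ι κ ℝ) (Q : Matrix κ μ ℝ) :
    Matrix ι μ ℝ :=
  fun i k => ∑ j, P i j * Q j k / b j

variable {b : κ → ℝ} {P : Matrix ι κ ℝ} {Q : Matrix κ μ ℝ}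

lemma sum_mul_div_eq_left [Fintype ι] [Fintype μ] (hP : ∀ i j, 0 ≤ P i j)
    (hPb : ∀ j, ∑ i, P i j = b j) (hQb : ∀ j, ∑ k, Q j k = b j) (i : ι) (j : κ) :
    ∑ k, P i j * Q j k / b j = P i j := by
  rw [← sum_div, ← mul_sum, hQb]
  refine mul_div_cancel_of_imp fun h => ?_
  rw [← hPb, sum_eq_zero_iff_of_nonneg fun i _ => hP i j] at h
  exact h i (mem_univ i)

lemma sum_mul_div_eq_right [Fintype ι] [Fintype μ] (hQ : ∀ j k, 0 ≤ Q j k)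
    (hPb : ∀ j, ∑ i, P i j = b j) (hQb : ∀ j, ∑ k, Q j k = b j) (j : κ) (k : μ) :
    ∑ i, P i j * Q j k / b j = Q j k := by
  rw [← sum_div, ← sum_mul, hPb, mul_comm]
  refine mul_div_cancel_of_imp fun h => ?_
  rw [← hQb, sum_eq_zero_iff_of_nonneg fun k _ => hQ j k] at h
  exact h k (mem_univ k)

lemma glue_nonneg [Fintype ι] [Fintype κ] (hP : ∀ i j, 0 ≤ P i j) (hQ : ∀ j k, 0 ≤ Q j k)
    (hPb : ∀ j, ∑ i, P i j = b j) (i : ι) (k : μ) : 0 ≤ glue b P Q i k :=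
  sum_nonneg fun j _ => div_nonneg (mul_nonneg (hP i j) (hQ j k))
    (hPb j ▸ sum_nonneg fun i _ => hP i j)

theorem sum_glue_mul_le [Fintype ι] [Fintype κ] [Fintype μ]
    (hP : ∀ i j, 0 ≤ P i j) (hQ : ∀ j k, 0 ≤ Q j k)
    (hPb : ∀ j, ∑ i, P i j = b j) (hQb : ∀ j, ∑ k, Q j k = b j)
    {K : ℝ} {c : ι → μ → ℝ} {c₁ : ι → κ → ℝ} {c₂ : κ → μ → ℝ}
    (hc : ∀ i j k, c i k ≤ K * (c₁ i j + c₂ j k)) :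
    ∑ i, ∑ k, glue b P Q i k * c i k ≤
      K * (∑ i, ∑ j, P i j * c₁ i j + ∑ j, ∑ k, Q j k * c₂ j k) := by
  have hb : ∀ j, 0 ≤ b j := fun j => hPb j ▸ sum_nonneg fun i _ => hP i j
  have h₁ : ∑ i, ∑ j, ∑ k, P i j * Q j k / b j * c₁ i j =
      ∑ i, ∑ j, P i j * c₁ i j := by
    simp only [← sum_mul, sum_mul_div_eq_left hP hPb hQb]
  have h₂ : ∑ i, ∑ j, ∑ k, P i j * Q j k / b j * c₂ j k =
      ∑ j, ∑ k, Q j k * c₂ j k := by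
    rw [sum_comm]
    refine sum_congr rfl fun j _ => ?_
    rw [sum_comm]
    simp only [← sum_mul, sum_mul_div_eq_right hQ hPb hQb]
  calc ∑ i, ∑ k, glue b P Q i k * c i k
      = ∑ i, ∑ j, ∑ k, P i j * Q j k / b j * c i k := by
        simp only [glue, sum_mul]
        exact sum_congr rfl fun i _ => sum_comm
    _ ≤ ∑ i, ∑ j, ∑ k, P i j * Q j k / b j * (K * (c₁ i j + c₂ j k)) := by
        gcongr with i _ j _ k _
        · exact div_nonneg (mul_nonneg (hP i j) (hQ j k)) (hb j)
        · exact hc i j k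
    _ = K * (∑ i, ∑ j, P i j * c₁ i j + ∑ j, ∑ k, Q j k * c₂ j k) := by
        rw [← h₁, ← h₂, ← sum_add_distrib, mul_sum]
        refine sum_congr rfl fun i _ => ?_
        simp only [← sum_add_distrib, mul_sum]
        exact sum_congr rfl fun j _ => sum_congr rfl fun k _ => by ring

end Gluing

section Kronecker

variable {ι κ μ ι' κ' μ' : Type*}

lemma sum_kronecker_apply_left [Fintype ι] [Fintype ι'] (A : Matrix ι κ ℝ) (B : Matrix ι' κ' ℝ)
    (y : κ × κ') :
    ∑ x, (A ⊗ₖ B) x y = (∑ i, A i y.1) * ∑ i', B i' y.2 := by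
  simp only [kroneckerMap_apply, Fintype.sum_prod_type, sum_mul_sum]

lemma sum_kronecker_apply_right [Fintype κ] [Fintype κ'] (A : Matrix ι κ ℝ) (B : Matrix ι' κ' ℝ)
    (x : ι × ι') :
    ∑ y, (A ⊗ₖ B) x y = (∑ j, A x.1 j) * ∑ j', B x.2 j' := by
  simp only [kroneckerMap_apply, Fintype.sum_prod_type, sum_mul_sum]

lemma glue_kronecker [Fintype κ] [Fintype κ'] (b : κ → ℝ) (b' : κ' → ℝ)
    (P : Matrix ι κ ℝ) (P' : Matrix ι' κ' ℝ) (Q : Matrix κ μ ℝ) (Q' : Matrix κ' μ' ℝ) :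
    glue (fun y => b y.1 * b' y.2) (P ⊗ₖ P') (Q ⊗ₖ Q') = glue b P Q ⊗ₖ glue b' P' Q' := by
  ext ⟨i, i'⟩ ⟨k, k'⟩
  simp only [glue, kroneckerMap_apply, Fintype.sum_prod_type, sum_mul_sum]
  exact sum_congr rfl fun j _ => sum_congr rfl fun j' _ => by ring

end Kronecker

lemma gwTerm_eq_sum_kronecker {n m : ℕ} (q : ℝ) (CX : Matrix (Fin n) (Fin n) ℝ)
    (CY : Matrix (Fin m) (Fin m) ℝ) (T : Matrix (Fin n) (Fin m) ℝ) :
    gwTerm q CX CY T = ∑ x, ∑ y, (T ⊗ₖ T) x y * |CX x.1 x.2 - CY y.1 y.2| ^ q := by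
  simp only [gwTerm, kroneckerMap_apply, Fintype.sum_prod_type]
  exact sum_congr rfl fun i _ => sum_congr rfl fun i' _ => sum_congr rfl fun j _ =>
    sum_congr rfl fun j' _ => by ring

section Couplings

variable {n m p d : ℕ} {a : Fin n → ℝ} {b : Fin m → ℝ} {c : Fin p → ℝ}
  {T₁ : Matrix (Fin n) (Fin m) ℝ} {T₂ : Matrix (Fin m) (Fin p) ℝ}

lemma InU.of_isProb (ha : IsProb a) (hb : IsProb b) : InU a b (fun i j => a i * b j) :=
  ⟨fun i j => mul_nonneg (ha.1 i) (hb.1 j), fun i => by rw [← mul_sum, hb.2, mul_one],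
    fun j => by rw [← sum_mul, ha.2, one_mul]⟩

lemma InU.glue (h₁ : InU a b T₁) (h₂ : InU b c T₂) : InU a c (glue b T₁ T₂) := by
  refine ⟨glue_nonneg h₁.1 h₂.1 h₁.2.2, fun i => ?_, fun k => ?_⟩
  · simp only [_root_.glue]
    rw [sum_comm]
    simp only [sum_mul_div_eq_left h₁.1 h₁.2.2 h₂.2.1, h₁.2.1]
  · simp only [_root_.glue]
    rw [sum_comm]
    simp only [sum_mul_div_eq_right h₂.1 h₁.2.2 h₂.2.1, h₂.2.2]

lemma score_nonneg (q : ℝ) (X : Matrix (Fin n) (Fin d) ℝ) (Y : Matrix (Fin m) (Fin d) ℝ)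
    {T : Matrix (Fin n) (Fin m) ℝ} (hT : ∀ i j, 0 ≤ T i j) (r : Fin d) : 0 ≤ score q X Y T r :=
  sum_nonneg fun i _ => sum_nonneg fun j _ =>
    mul_nonneg (hT i j) (Real.rpow_nonneg (abs_nonneg _) _)

lemma gwTerm_nonneg (q : ℝ) (CX : Matrix (Fin n) (Fin n) ℝ) (CY : Matrix (Fin m) (Fin m) ℝ)
    {T : Matrix (Fin n) (Fin m) ℝ} (hT : ∀ i j, 0 ≤ T i j) : 0 ≤ gwTerm q CX CY T :=
  sum_nonneg fun i _ => sum_nonneg fun i' _ => sum_nonneg fun j _ => sum_nonneg fun j' _ =>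
    mul_nonneg (mul_nonneg (Real.rpow_nonneg (abs_nonneg _) _) (hT i j)) (hT i' j')

variable {q : ℝ}

lemma score_glue_le (hq : 1 ≤ q) (h₁ : InU a b T₁) (h₂ : InU b c T₂)
    (X : Matrix (Fin n) (Fin d) ℝ) (Y : Matrix (Fin m) (Fin d) ℝ)
    (Z : Matrix (Fin p) (Fin d) ℝ) (r : Fin d) :
    score q X Z (glue b T₁ T₂) r ≤ 2 ^ (q - 1) * (score q X Y T₁ r + score q Y Z T₂ r) :=
  sum_glue_mul_le h₁.1 h₂.1 h₁.2.2 h₂.2.1 fun _ _ _ => abs_sub_rpow_le_two_rpow_mul hq _ _ _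

lemma gwTerm_glue_le (hq : 1 ≤ q) (h₁ : InU a b T₁) (h₂ : InU b c T₂)
    (CX : Matrix (Fin n) (Fin n) ℝ) (CY : Matrix (Fin m) (Fin m) ℝ)
    (CZ : Matrix (Fin p) (Fin p) ℝ) :
    gwTerm q CX CZ (glue b T₁ T₂) ≤
      2 ^ (q - 1) * (gwTerm q CX CY T₁ + gwTerm q CY CZ T₂) := by
  simp only [gwTerm_eq_sum_kronecker, ← glue_kronecker]
  refine sum_glue_mul_le (fun _ _ => mul_nonneg (h₁.1 _ _) (h₁.1 _ _))
    (fun _ _ => mul_nonneg (h₂.1 _ _) (h₂.1 _ _)) (fun y => ?_) (fun y => ?_)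
    fun _ _ _ => abs_sub_rpow_le_two_rpow_mul hq _ _ _
  · exact (sum_kronecker_apply_left T₁ T₁ y).trans (by rw [h₁.2.2, h₁.2.2])
  · exact (sum_kronecker_apply_right T₂ T₂ y).trans (by rw [h₂.2.1, h₂.2.1])

end Couplings

/-- `fsLVal` is by definition the infimum of this set. -/
def fsLValues {n m d : ℕ} (q α lam : ℝ)
    (CX : Matrix (Fin n) (Fin n) ℝ) (CY : Matrix (Fin m) (Fin m) ℝ)
    (X : Matrix (Fin n) (Fin d) ℝ) (Y : Matrix (Fin m) (Fin d) ℝ)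
    (a : Fin n → ℝ) (b : Fin m → ℝ) : Set ℝ :=
  {v | ∃ T w, InU a b T ∧ (∀ r, w r ∈ Set.Icc (0:ℝ) 1) ∧ v = FL q α lam CX CY X Y T w}

section Objective

variable {n m p d : ℕ} {q α lam : ℝ} {a : Fin n → ℝ} {b : Fin m → ℝ} {c : Fin p → ℝ}
  {CX : Matrix (Fin n) (Fin n) ℝ} {CY : Matrix (Fin m) (Fin m) ℝ}
  {CZ : Matrix (Fin p) (Fin p) ℝ} {X : Matrix (Fin n) (Fin d) ℝ}
  {Y : Matrix (Fin m) (Fin d) ℝ} {Z : Matrix (Fin p) (Fin d) ℝ}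

lemma FL_nonneg (hα : α ∈ Set.Icc (0:ℝ) 1) (hlam : 0 ≤ lam) {T : Matrix (Fin n) (Fin m) ℝ}
    {w : Fin d → ℝ} (hT : ∀ i j, 0 ≤ T i j) (hw : ∀ r, w r ∈ Set.Icc (0:ℝ) 1) :
    0 ≤ FL q α lam CX CY X Y T w := by
  have hfeat : 0 ≤ ∑ r, (1 - w r) * score q X Y T r :=
    sum_nonneg fun r _ => mul_nonneg (sub_nonneg.2 (hw r).2) (score_nonneg q X Y hT r)
  have hlasso : 0 ≤ ∑ r, w r := sum_nonneg fun r _ => (hw r).1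
  have hgw := gwTerm_nonneg q CX CY hT
  unfold FL
  exact add_nonneg (add_nonneg (mul_nonneg (sub_nonneg.2 hα.2) hfeat) (mul_nonneg hα.1 hgw))
    (mul_nonneg hlam hlasso)

lemma FL_glue_le (hq : 1 ≤ q) (hα : α ∈ Set.Icc (0:ℝ) 1) (hlam : 0 ≤ lam)
    {T₁ : Matrix (Fin n) (Fin m) ℝ} {T₂ : Matrix (Fin m) (Fin p) ℝ} {w₁ w₂ : Fin d → ℝ}
    (h₁ : InU a b T₁) (h₂ : InU b c T₂)
    (hw₁ : ∀ r, w₁ r ∈ Set.Icc (0:ℝ) 1) (hw₂ : ∀ r, w₂ r ∈ Set.Icc (0:ℝ) 1) :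
    FL q α lam CX CZ X Z (glue b T₁ T₂) (w₁ ⊔ w₂) ≤
      2 ^ (q - 1) * (FL q α lam CX CY X Y T₁ w₁ + FL q α lam CY CZ Y Z T₂ w₂) := by
  have hK : (1:ℝ) ≤ 2 ^ (q - 1) := Real.one_le_rpow one_le_two (by linarith)
  have hfeat : ∑ r, (1 - (w₁ ⊔ w₂) r) * score q X Z (glue b T₁ T₂) r ≤
      2 ^ (q - 1) *
        (∑ r, (1 - w₁ r) * score q X Y T₁ r + ∑ r, (1 - w₂ r) * score q Y Z T₂ r) := by
    rw [← sum_add_distrib, mul_sum]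
    exact sum_le_sum fun r _ => one_sub_max_mul_le (hw₁ r).2 (hw₂ r).2
      (score_nonneg q X Y h₁.1 r) (score_nonneg q Y Z h₂.1 r) (by linarith)
      (score_glue_le hq h₁ h₂ X Y Z r)
  have hgw := gwTerm_glue_le hq h₁ h₂ CX CY CZ
  have hlasso : ∑ r, (w₁ ⊔ w₂) r ≤ 2 ^ (q - 1) * (∑ r, w₁ r + ∑ r, w₂ r) := by
    rw [← sum_add_distrib, mul_sum]
    exact sum_le_sum fun r _ => max_le_mul_add (hw₁ r).1 (hw₂ r).1 hK
  unfold FL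
  linarith [mul_le_mul_of_nonneg_left hfeat (sub_nonneg.2 hα.2),
    mul_le_mul_of_nonneg_left hgw hα.1, mul_le_mul_of_nonneg_left hlasso hlam]

lemma fsLValues_nonempty (ha : IsProb a) (hb : IsProb b) :
    (fsLValues q α lam CX CY X Y a b).Nonempty :=
  ⟨_, _, 0, InU.of_isProb ha hb, fun _ => ⟨le_rfl, zero_le_one⟩, rfl⟩

lemma fsLValues_bddBelow (hα : α ∈ Set.Icc (0:ℝ) 1) (hlam : 0 ≤ lam) :
    BddBelow (fsLValues q α lam CX CY X Y a b) := by
  refine ⟨0, ?_⟩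
  rintro _ ⟨T, w, hT, hw, rfl⟩
  exact FL_nonneg hα hlam hT.1 hw

end Objective

theorem lasso_fsFGW_relaxed_triangle_general (n m p d : ℕ)
    (q : ℝ) (hq : 1 ≤ q)
    (α lam : ℝ) (hα : α ∈ Set.Icc (0:ℝ) 1) (hlam : 0 < lam)
    (a : Fin n → ℝ) (b : Fin m → ℝ) (c : Fin p → ℝ)
    (ha : IsProb a) (hb : IsProb b) (hc : IsProb c)
    (CX : Matrix (Fin n) (Fin n) ℝ) (CY : Matrix (Fin m) (Fin m) ℝ)
    (CZ : Matrix (Fin p) (Fin p) ℝ)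
    (X : Matrix (Fin n) (Fin d) ℝ) (Y : Matrix (Fin m) (Fin d) ℝ)
    (Z : Matrix (Fin p) (Fin d) ℝ) :
    fsLVal q α lam CX CZ X Z a c ≤
      (2:ℝ) ^ (q - 1) *
        (fsLVal q α lam CX CY X Y a b + fsLVal q α lam CY CZ Y Z b c) := by
  refine csInf_le_mul_add_csInf (by positivity) (fsLValues_nonempty ha hb)
    (fsLValues_bddBelow hα hlam.le) (fsLValues_nonempty hb hc) (fsLValues_bddBelow hα hlam.le)
    (fsLValues_bddBelow hα hlam.le) ?_
  rintro _ ⟨T₁, w₁, h₁, hw₁, rfl⟩ _ ⟨T₂, w₂, h₂, hw₂, rfl⟩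
  have hw : ∀ r, (w₁ ⊔ w₂) r ∈ Set.Icc (0:ℝ) 1 := fun r =>
    ⟨(hw₁ r).1.trans le_sup_left, sup_le (hw₁ r).2 (hw₂ r).2⟩
  exact ⟨_, ⟨glue b T₁ T₂, w₁ ⊔ w₂, h₁.glue h₂, hw, rfl⟩,
    FL_glue_le hq hα hlam.le h₁ h₂ hw₁ hw₂⟩

/-- relaxed triangle inequality (factor `2^{q−1}`) for
Lasso-regularized fsFGW with exponent `q ≥ 1`. -/
theorem lasso_fsFGW_relaxed_triangle (n m p d : ℕ)
    (hn : 1 ≤ n) (hm : 1 ≤ m) (hp : 1 ≤ p) (hd : 1 ≤ d)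
    (q : ℝ) (hq : 1 ≤ q)
    (α lam : ℝ) (hα : α ∈ Set.Icc (0:ℝ) 1) (hlam : 0 < lam)
    (a : Fin n → ℝ) (b : Fin m → ℝ) (c : Fin p → ℝ)
    (ha : IsProb a) (hb : IsProb b) (hc : IsProb c) (hbpos : ∀ j, 0 < b j)
    (CX : Matrix (Fin n) (Fin n) ℝ) (CY : Matrix (Fin m) (Fin m) ℝ)
    (CZ : Matrix (Fin p) (Fin p) ℝ)
    (X : Matrix (Fin n) (Fin d) ℝ) (Y : Matrix (Fin m) (Fin d) ℝ)
    (Z : Matrix (Fin p) (Fin d) ℝ) :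
    fsLVal q α lam CX CZ X Z a c ≤
      (2:ℝ) ^ (q - 1) *
        (fsLVal q α lam CX CY X Y a b + fsLVal q α lam CY CZ Y Z b c) :=
  lasso_fsFGW_relaxed_triangle_general n m p d q hq α lam hα hlam a b c ha hb hc CX CY CZ X Y Z
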